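/- Let a be a symmetric positive definite d×d real matrix, E a skew-symmetric d×d real matrix, and H a real Hilbert space containing ℝ^d-valued elements with closed subspace F_pot. Suppose for each l ∈ ℝ^d, v_l ∈ F_pot is the unique solution of ⟨φ, (a+E)(l + v_l)⟩ = 0 for all φ ∈ F_pot, and define σ(a,E)l = ⟨(a+E)(l + v_l)⟩ (the mean value, a linear map of l). Then σ(a,−E) = σ(a,E)ᵀ, i.e., transposing the effective conductivity corresponds to reversing the sign of the skew-symmetric part. -/

import Mathlib

/-!
The corrector equation lets each entry of the effective matrix be computed as an energy
`σ i j = ⟨(e_i + w) · M (e_j + v_j)⟩` for an arbitrary potential perturbation `w`. Choosing `w`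
to be the corrector of the transposed field makes both sides of `σ' j i = σ i j` the mean of the
same bilinear expression, since `x ⬝ᵥ Mᵀ y = y ⬝ᵥ M x`. For `M = a + E` with `a` symmetric and `E`
skew, `Mᵀ = a - E`.
-/

open Matrix MeasureTheory

namespace Matrix

variable {ι X : Type*} [Fintype ι] [MeasurableSpace X] {μ : Measure X}

lemma integrable_dotProduct {φ ψ : X → ι → ℝ} (hφ : MemLp φ 2 μ) (hψ : MemLp ψ 2 μ) :
    Integrable (fun x => φ x ⬝ᵥ ψ x) μ := by
  simp only [dotProduct]
  exact integrable_finsetSum _ fun k _ => (hφ.eval k).integrable_mul (hψ.eval k)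

lemma memLp_mulVec {p : ENNReal} {M : X → Matrix ι ι ℝ}
    (hM : ∀ i j, MemLp (fun x => M x i j) ⊤ μ) {w : X → ι → ℝ} (hw : MemLp w p μ) :
    MemLp (fun x => M x *ᵥ w x) p μ := by
  refine MemLp.of_eval fun i => ?_
  simp only [mulVec, dotProduct]
  exact memLp_finsetSum _ fun j _ => (hw.eval j).mul' (r := p) (hM i j)

omit [Fintype ι] in
lemma memLp_top_of_measurable_of_bounded {E : X → Matrix ι ι ℝ}
    (hEmeas : ∀ i j, Measurable fun x => E x i j) (hEbdd : ∃ C : ℝ, ∀ x i j, |E x i j| ≤ C)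
    (i j : ι) : MemLp (fun x => E x i j) ⊤ μ := by
  obtain ⟨C, hC⟩ := hEbdd
  exact memLp_top_of_bound (hEmeas i j).aestronglyMeasurable C (.of_forall fun x => hC x i j)

section Corrector

variable [DecidableEq ι] [IsFiniteMeasure μ] {Fpot : Set (X → ι → ℝ)}
  {M : X → Matrix ι ι ℝ} {v : (ι → ℝ) → X → ι → ℝ} {σ : Matrix ι ι ℝ}

lemma entry_eq_integral_dotProduct_add (hFpot : ∀ f ∈ Fpot, MemLp f 2 μ)
    (hM : ∀ i j, MemLp (fun x => M x i j) ⊤ μ) (hv : ∀ l, v l ∈ Fpot)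
    (horth : ∀ l, ∀ φ ∈ Fpot, ∫ x, φ x ⬝ᵥ M x *ᵥ (l + v l x) ∂μ = 0)
    (hσ : ∀ l, σ *ᵥ l = fun i => ∫ x, (M x *ᵥ (l + v l x)) i ∂μ)
    (i j : ι) {w : X → ι → ℝ} (hw : w ∈ Fpot) :
    σ i j = ∫ x, (Pi.single i 1 + w x) ⬝ᵥ M x *ᵥ (Pi.single j 1 + v (Pi.single j 1) x) ∂μ := by
  have hflux : MemLp (fun x => M x *ᵥ (Pi.single j 1 + v (Pi.single j 1) x)) 2 μ :=
    memLp_mulVec hM ((memLp_const (Pi.single j 1)).add (hFpot _ (hv (Pi.single j 1))))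
  simp only [add_dotProduct]
  rw [integral_add (integrable_dotProduct (memLp_const _) hflux)
      (integrable_dotProduct (hFpot w hw) hflux), horth _ w hw, add_zero]
  simpa [single_dotProduct, mulVec_single_one] using congrFun (hσ (Pi.single j 1)) i

theorem effective_transpose {M' : X → Matrix ι ι ℝ} {v' : (ι → ℝ) → X → ι → ℝ}
    {σ' : Matrix ι ι ℝ} (hFpot : ∀ f ∈ Fpot, MemLp f 2 μ)
    (hM : ∀ i j, MemLp (fun x => M x i j) ⊤ μ) (hM' : ∀ x, M' x = (M x)ᵀ)
    (hv : ∀ l, v l ∈ Fpot) (hv' : ∀ l, v' l ∈ Fpot)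
    (horth : ∀ l, ∀ φ ∈ Fpot, ∫ x, φ x ⬝ᵥ M x *ᵥ (l + v l x) ∂μ = 0)
    (horth' : ∀ l, ∀ φ ∈ Fpot, ∫ x, φ x ⬝ᵥ M' x *ᵥ (l + v' l x) ∂μ = 0)
    (hσ : ∀ l, σ *ᵥ l = fun i => ∫ x, (M x *ᵥ (l + v l x)) i ∂μ)
    (hσ' : ∀ l, σ' *ᵥ l = fun i => ∫ x, (M' x *ᵥ (l + v' l x)) i ∂μ) :
    σ' = σᵀ := by
  have hMt : ∀ i j, MemLp (fun x => M' x i j) ⊤ μ := by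
    simpa only [hM', transpose_apply] using fun i j => hM j i
  ext i j
  rw [transpose_apply,
    entry_eq_integral_dotProduct_add hFpot hMt hv' horth' hσ' i j (hv (Pi.single i 1)),
    entry_eq_integral_dotProduct_add hFpot hM hv horth hσ j i (hv' (Pi.single j 1))]
  simp only [hM', dotProduct_transpose_mulVec]

end Corrector

end Matrix

theorem stmt6_general {d : ℕ} {X : Type*} [MeasurableSpace X] (μ : Measure X)
    [IsProbabilityMeasure μ]
    (a : Matrix (Fin d) (Fin d) ℝ) (ha : a.PosDef)
    (E : X → Matrix (Fin d) (Fin d) ℝ)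
    (hEmeas : ∀ i j, Measurable fun x => E x i j)
    (hEskew : ∀ x, (E x)ᵀ = -(E x))
    (hEbdd : ∃ C : ℝ, ∀ x i j, |E x i j| ≤ C)
    (Fpot : Set (X → Fin d → ℝ))
    (hFpotL2 : ∀ f ∈ Fpot, MemLp f 2 μ)
    (vE vE' : (Fin d → ℝ) → X → Fin d → ℝ)
    (hvE : ∀ l, vE l ∈ Fpot) (hvE' : ∀ l, vE' l ∈ Fpot)
    (horthE : ∀ l, ∀ φ ∈ Fpot,
      ∫ x, φ x ⬝ᵥ (a + E x).mulVec (l + vE l x) ∂μ = 0)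
    (horthE' : ∀ l, ∀ φ ∈ Fpot,
      ∫ x, φ x ⬝ᵥ (a - E x).mulVec (l + vE' l x) ∂μ = 0)
    (σ σ' : Matrix (Fin d) (Fin d) ℝ)
    (hσ : ∀ l, σ.mulVec l = fun i => ∫ x, ((a + E x).mulVec (l + vE l x)) i ∂μ)
    (hσ' : ∀ l, σ'.mulVec l = fun i => ∫ x, ((a - E x).mulVec (l + vE' l x)) i ∂μ) :
    σ' = σᵀ := by
  have hM : ∀ i j, MemLp (fun x => (a + E x) i j) ⊤ μ := fun i j =>
    (memLp_top_const (a i j)).add (memLp_top_of_measurable_of_bounded hEmeas hEbdd i j)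
  have ha_symm : aᵀ = a := ha.isHermitian.eq
  have hM' : ∀ x, a - E x = (a + E x)ᵀ := fun x => by
    rw [transpose_add, ha_symm, hEskew, sub_eq_add_neg]
  exact effective_transpose hFpotL2 hM hM' hvE hvE' horthE horthE' hσ hσ'

/-- Reversing the sign of the skew-symmetric part `E` transposes the effective
conductivity: `σ(a, −E) = σ(a, E)ᵀ`.  Here `Fpot` is the closed subspace of
mean-zero potential fields in `L²(X,μ)^d`, `vE l` (resp. `vE' l`) is the unique
corrector in `Fpot` for the matrix `a + E` (resp. `a − E`), and the effective
conductivities are defined through the μ-mean of the fluxes. -/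
theorem stmt6 {d : ℕ} {X : Type*} [MeasurableSpace X] (μ : Measure X)
    [IsProbabilityMeasure μ]
    (a : Matrix (Fin d) (Fin d) ℝ) (ha : a.PosDef)
    (E : X → Matrix (Fin d) (Fin d) ℝ)
    (hEmeas : ∀ i j, Measurable fun x => E x i j)
    (hEskew : ∀ x, (E x)ᵀ = -(E x))
    (hEbdd : ∃ C : ℝ, ∀ x i j, |E x i j| ≤ C)
    (Fpot : Set (X → Fin d → ℝ))
    (hFpotL2 : ∀ f ∈ Fpot, MemLp f 2 μ)
    (hFpotMean : ∀ f ∈ Fpot, ∀ i, ∫ x, f x i ∂μ = 0)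
    (vE vE' : (Fin d → ℝ) → X → Fin d → ℝ)
    (hvE : ∀ l, vE l ∈ Fpot) (hvE' : ∀ l, vE' l ∈ Fpot)
    (horthE : ∀ l, ∀ φ ∈ Fpot,
      ∫ x, φ x ⬝ᵥ (a + E x).mulVec (l + vE l x) ∂μ = 0)
    (horthE' : ∀ l, ∀ φ ∈ Fpot,
      ∫ x, φ x ⬝ᵥ (a - E x).mulVec (l + vE' l x) ∂μ = 0)
    (huniqE : ∀ l, ∀ u ∈ Fpot,
      (∀ φ ∈ Fpot, ∫ x, φ x ⬝ᵥ (a + E x).mulVec (l + u x) ∂μ = 0) → u = vE l)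
    (huniqE' : ∀ l, ∀ u ∈ Fpot,
      (∀ φ ∈ Fpot, ∫ x, φ x ⬝ᵥ (a - E x).mulVec (l + u x) ∂μ = 0) → u = vE' l)
    (σ σ' : Matrix (Fin d) (Fin d) ℝ)
    (hσ : ∀ l, σ.mulVec l = fun i => ∫ x, ((a + E x).mulVec (l + vE l x)) i ∂μ)
    (hσ' : ∀ l, σ'.mulVec l = fun i => ∫ x, ((a - E x).mulVec (l + vE' l x)) i ∂μ) :
    σ' = σᵀ :=
  stmt6_general μ a ha E hEmeas hEskew hEbdd Fpot hFpotL2 vE vE' hvE hvE' horthE horthE' σ σ' hσ hσ'
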